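/- arXiv:2106.07233 — 11 statements merged into one kernel-verified Lean document; each statement's English description precedes it below -/
import Mathlib

section
/- M is stable under wide pullbacks: given a family of morphisms (f_i : A_i → B) indexed by a set I and a wide pullback cone (pr_i : P → A_i), if f_i ∈ M for all i ∈ I \ {j}, then the projection pr_j : P → A_j is in M. -/
open CategoryTheory CategoryTheory.Limits

universe v u

/-- An (E,M)-factorization system on a category. -/
structure FactorizationSystem (K : Type u) [Category.{v} K] : Type (max u (v+1)) where
  E : MorphismProperty K
  M : MorphismProperty K
  E_comp_iso : ∀ {X Y Z : K} (e : X ⟶ Y) (i : Y ⟶ Z), IsIso i → E e → E (e ≫ i)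
  iso_comp_E : ∀ {X Y Z : K} (i : X ⟶ Y) (e : Y ⟶ Z), IsIso i → E e → E (i ≫ e)
  M_comp_iso : ∀ {X Y Z : K} (m : X ⟶ Y) (i : Y ⟶ Z), IsIso i → M m → M (m ≫ i)
  iso_comp_M : ∀ {X Y Z : K} (i : X ⟶ Y) (m : Y ⟶ Z), IsIso i → M m → M (i ≫ m)
  factor : ∀ {X Y : K} (f : X ⟶ Y),
      ∃ (I : K) (e : X ⟶ I) (m : I ⟶ Y), E e ∧ M m ∧ e ≫ m = f
  diagonal : ∀ {A B X Y : K} (e : A ⟶ B) (f : A ⟶ X) (g : B ⟶ Y) (m : X ⟶ Y),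
      E e → M m → e ≫ g = f ≫ m → ∃! d : B ⟶ X, e ≫ d = f ∧ d ≫ m = g

/-- An object is M-minimal if every M-morphism into it is an isomorphism. -/
def MMinimal {K : Type u} [Category.{v} K] (fs : FactorizationSystem K) (C : K) : Prop :=
  ∀ {D : K} (h : D ⟶ C), fs.M h → IsIso h

/-!
A morphism lies in `M` as soon as it has the right lifting property against `E`: factor it as
`e ≫ m`, lift in the square `e ≫ m = 𝟙 ≫ (e ≫ m)` to get a retraction `r` of `e`, and the
uniqueness of diagonals in the square `e ≫ m = e ≫ m` forces `r ≫ e = 𝟙`. Conversely `M` has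
the right lifting property against `E`, and this property, for any class of maps, passes from the
`f i` with `i ≠ j` to the projection `pr j`: lift separately against each `f i` and assemble the
lifts, together with the given map into `A j`, into a cone over the wide cospan.
-/

universe w

namespace FactorizationSystem

variable {K : Type u} [Category.{v} K] (fs : FactorizationSystem K)

lemma diagonal_unique {A B X Y : K} {e : A ⟶ B} {m : X ⟶ Y} (he : fs.E e) (hm : fs.M m)
    {d₁ d₂ : B ⟶ X} (h_left : e ≫ d₁ = e ≫ d₂) (h_right : d₁ ≫ m = d₂ ≫ m) : d₁ = d₂ :=
  (fs.diagonal e (e ≫ d₂) (d₂ ≫ m) m he hm (Category.assoc _ _ _).symm).unique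
    ⟨h_left, h_right⟩ ⟨rfl, rfl⟩

lemma M_le_rlp_E : fs.M ≤ fs.E.rlp := by
  intro X Y m hm A B e he
  refine ⟨fun {u v} sq => ?_⟩
  obtain ⟨d, ⟨hd_left, hd_right⟩, -⟩ := fs.diagonal e u v m he hm sq.w.symm
  exact ⟨⟨{ l := d, fac_left := hd_left, fac_right := hd_right }⟩⟩

lemma rlp_E_le_M : fs.E.rlp ≤ fs.M := by
  intro X Y f hf
  obtain ⟨Z, e, m, he, hm, rfl⟩ := fs.factor f
  have := hf e he
  have sq : CommSq (𝟙 X) e (e ≫ m) m := ⟨by simp⟩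
  have : IsIso e :=
    ⟨sq.lift, sq.fac_left, fs.diagonal_unique he hm (by simp [sq.fac_left_assoc])
      (by simp [sq.fac_right])⟩
  exact fs.iso_comp_M e m this hm

end FactorizationSystem

namespace CategoryTheory.Limits.IsLimit

variable {K : Type u} [Category.{v} K] {I : Type w} {B : K} {A : I → K} {f : ∀ i, A i ⟶ B}
  {c : Cone (WidePullbackShape.wideCospan B A f)}

lemma wideCospan_hom_ext [Nonempty I] (hc : IsLimit c) {Y : K} {g h : Y ⟶ c.pt}
    (w : ∀ i, g ≫ c.π.app (some i) = h ≫ c.π.app (some i)) : g = h := by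
  refine hc.hom_ext fun o => ?_
  cases o with
  | none =>
    obtain ⟨i⟩ := ‹Nonempty I›
    rw [← c.w (WidePullbackShape.Hom.term i), reassoc_of% (w i)]
  | some i => exact w i

lemma exists_wideCospan_lift (hc : IsLimit c) (j : I) {Y : K} (v : Y ⟶ A j) (d : ∀ i, i ≠ j → (Y ⟶ A i))
    (hd : ∀ i hi, d i hi ≫ f i = v ≫ f j) :
    ∃ l : Y ⟶ c.pt, l ≫ c.π.app (some j) = v ∧ ∀ i hi, l ≫ c.π.app (some i) = d i hi := by
  classical
  let leg : ∀ i, Y ⟶ A i := fun i => if h : i = j then h ▸ v else d i h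
  have hleg : ∀ i, leg i ≫ f i = v ≫ f j := by
    intro i
    by_cases h : i = j
    · subst h
      simp [leg]
    · simpa only [leg, dif_neg h] using hd i h
  let s := WidePullbackShape.mkCone (F := WidePullbackShape.wideCospan B A f) (v ≫ f j) leg hleg
  exact ⟨hc.lift s, (hc.fac s (some j)).trans (show leg j = v by simp [leg]),
    fun i hi => (hc.fac s (some i)).trans (show leg i = d i hi by simp [leg, hi])⟩

end CategoryTheory.Limits.IsLimit

lemma MorphismProperty.rlp_wideCospan_cone_π {K : Type u} [Category.{v} K]
    (T : MorphismProperty K) {I : Type w} {B : K} (A : I → K) (f : ∀ i, A i ⟶ B)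
    (c : Cone (WidePullbackShape.wideCospan B A f)) (hc : IsLimit c) (j : I)
    (hf : ∀ i, i ≠ j → T.rlp (f i)) :
    T.rlp (c.π.app (some j)) := by
  let pr : ∀ i, c.pt ⟶ A i := fun i => c.π.app (some i)
  have hπ : ∀ i, pr i ≫ f i = c.π.app none := fun i => c.w (WidePullbackShape.Hom.term i)
  change T.rlp (pr j)
  intro X Y e he
  refine ⟨fun {u v} sq => ?_⟩
  have lift_of_ne : ∀ i, i ≠ j → ∃ d : Y ⟶ A i, e ≫ d = u ≫ pr i ∧ d ≫ f i = v ≫ f j := by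
    intro i hi
    have := hf i hi e he
    have sq_i : CommSq (u ≫ pr i) e (f i) (v ≫ f j) :=
      ⟨by rw [Category.assoc, hπ, ← hπ j, sq.w_assoc]⟩
    exact ⟨sq_i.lift, sq_i.fac_left, sq_i.fac_right⟩
  choose d hd using lift_of_ne
  obtain ⟨l, hl_j, hl_ne⟩ := hc.exists_wideCospan_lift j v d fun i hi => (hd i hi).2
  have : Nonempty I := ⟨j⟩
  refine ⟨⟨{ l, fac_left := hc.wideCospan_hom_ext fun i => ?_, fac_right := hl_j }⟩⟩
  rcases eq_or_ne i j with rfl | hi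
  · rw [Category.assoc, hl_j]
    exact sq.w.symm
  · rw [Category.assoc, hl_ne i hi]
    exact (hd i hi).1

/-- M is stable under wide pullbacks: if all the f_i with i ≠ j lie in M, then the
wide-pullback projection pr_j lies in M. -/
theorem M_wide_pullback_stable {K : Type u} [Category.{v} K] (fs : FactorizationSystem K)
    {I : Type v} {B : K} (A : I → K) (f : ∀ i, A i ⟶ B)
    (c : Cone (WidePullbackShape.wideCospan B A f)) (hc : IsLimit c) (j : I)
    (hf : ∀ i, i ≠ j → fs.M (f i)) :
    fs.M (c.π.app (Option.some j)) :=
  fs.rlp_E_le_M _ <|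
    MorphismProperty.rlp_wideCospan_cone_π fs.E A f c hc j fun i hi => fs.M_le_rlp_E _ (hf i hi)
end

section
/- If an endofunctor F : C → C preserves M (i.e., m ∈ M implies Fm ∈ M), then an (E,M)-factorization system on C lifts to an (E-carried, M-carried)-factorization system on the category Coalg(F) of F-coalgebras, where the factorization of a coalgebra homomorphism is computed on the underlying C-morphism. -/
open CategoryTheory CategoryTheory.Limits

universe v u

/-- If F preserves M, the (E,M)-factorization system lifts to an
(E-carried, M-carried)-factorization system on Coalg(F), with factorizations
computed on the underlying morphisms. -/
theorem coalgebra_lift_factorization {C : Type u} [Category.{v} C]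
    (fs : FactorizationSystem C) (F : C ⥤ C)
    (hF : ∀ {X Y : C} (m : X ⟶ Y), fs.M m → fs.M (F.map m)) :
    ∃ fs' : FactorizationSystem (Endofunctor.Coalgebra F),
      (∀ {A B : Endofunctor.Coalgebra F} (f : A ⟶ B), fs'.E f ↔ fs.E f.f) ∧
      (∀ {A B : Endofunctor.Coalgebra F} (f : A ⟶ B), fs'.M f ↔ fs.M f.f) := by
  have isoF : ∀ {A B : Endofunctor.Coalgebra F} (i : A ⟶ B), IsIso i → IsIso i.f := by
    intro A B i hi
    exact inferInstanceAs (IsIso ((Endofunctor.Coalgebra.forget F).map i))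
  refine ⟨{
    E := fun A B f => fs.E f.f
    M := fun A B f => fs.M f.f
    E_comp_iso := fun e i hi he => fs.E_comp_iso e.f i.f (isoF i hi) he
    iso_comp_E := fun i e hi he => fs.iso_comp_E i.f e.f (isoF i hi) he
    M_comp_iso := fun m i hi hm => fs.M_comp_iso m.f i.f (isoF i hi) hm
    iso_comp_M := fun i m hi hm => fs.iso_comp_M i.f m.f (isoF i hi) hm
    factor := ?_
    diagonal := ?_ }, fun f => Iff.rfl, fun f => Iff.rfl⟩
  · intro A B f
    obtain ⟨I, e, m, he, hm, hem⟩ := fs.factor f.f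
    -- structure map on I via the diagonal
    obtain ⟨d, ⟨hd1, hd2⟩, -⟩ := fs.diagonal e (A.str ≫ F.map e) (m ≫ B.str) (F.map m)
      he (hF m hm) (by rw [← Category.assoc, hem, ← f.h, ← hem, F.map_comp, Category.assoc])
    refine ⟨⟨I, d⟩, ⟨e, hd1.symm⟩, ⟨m, hd2⟩, he, hm, ?_⟩
    ext
    exact hem
  · intro A B X Y e f g m he hm hsq
    have hsq' : e.f ≫ g.f = f.f ≫ m.f := by
      have := congrArg Endofunctor.Coalgebra.Hom.f hsq
      simpa using this
    obtain ⟨d, ⟨hd1, hd2⟩, hduniq⟩ := fs.diagonal e.f f.f g.f m.f he hm hsq'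
    -- show d is a coalgebra morphism, using uniqueness of the diagonal for a second square
    have hsq2 : e.f ≫ (B.str ≫ F.map g.f) = (f.f ≫ X.str) ≫ F.map m.f := by
      rw [← Category.assoc, ← e.h, Category.assoc, ← F.map_comp, hsq', F.map_comp,
        ← Category.assoc, f.h]
    obtain ⟨u, -, huniq⟩ := fs.diagonal e.f (f.f ≫ X.str) (B.str ≫ F.map g.f) (F.map m.f)
      he (hF m.f hm) hsq2
    have h1 : d ≫ X.str = u := huniq _ ⟨by rw [← Category.assoc, hd1],
      by rw [Category.assoc, m.h, ← Category.assoc, hd2, g.h]⟩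
    have h2 : B.str ≫ F.map d = u := huniq _ ⟨by
        rw [← Category.assoc, ← e.h, Category.assoc, ← F.map_comp, hd1, f.h],
      by rw [Category.assoc, ← F.map_comp, hd2]⟩
    refine ⟨⟨d, by rw [h2, ← h1]⟩, ⟨?_, ?_⟩, ?_⟩
    · ext; exact hd1
    · ext; exact hd2
    · intro d' ⟨h1', h2'⟩
      ext
      exact hduniq d'.f ⟨congrArg Endofunctor.Coalgebra.Hom.f h1',
        congrArg Endofunctor.Coalgebra.Hom.f h2'⟩
end

section
/- If an endofunctor F : C → C preserves E, then an (E,M)-factorization system on C lifts to an (E-carried, M-carried)-factorization system on the category Alg(F) of F-algebras. -/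
open CategoryTheory CategoryTheory.Limits

universe v u

lemma alg_iso_f {C : Type u} [Category.{v} C] {F : C ⥤ C}
    {A B : Endofunctor.Algebra F} (i : A ⟶ B) (hi : IsIso i) : IsIso i.f := by
  obtain ⟨j, hj1, hj2⟩ := hi
  exact ⟨j.f, congrArg Endofunctor.Algebra.Hom.f hj1,
    congrArg Endofunctor.Algebra.Hom.f hj2⟩

/-- If F preserves E, the (E,M)-factorization system lifts to an
(E-carried, M-carried)-factorization system on Alg(F). -/
theorem algebra_lift_factorization {C : Type u} [Category.{v} C]
    (fs : FactorizationSystem C) (F : C ⥤ C)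
    (hF : ∀ {X Y : C} (e : X ⟶ Y), fs.E e → fs.E (F.map e)) :
    ∃ fs' : FactorizationSystem (Endofunctor.Algebra F),
      (∀ {A B : Endofunctor.Algebra F} (f : A ⟶ B), fs'.E f ↔ fs.E f.f) ∧
      (∀ {A B : Endofunctor.Algebra F} (f : A ⟶ B), fs'.M f ↔ fs.M f.f) := by
  refine ⟨{
    E := fun _ _ f => fs.E f.f
    M := fun _ _ f => fs.M f.f
    E_comp_iso := fun e i hi he => by
      simpa using fs.E_comp_iso e.f i.f (alg_iso_f i hi) he
    iso_comp_E := fun i e hi he => by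
      simpa using fs.iso_comp_E i.f e.f (alg_iso_f i hi) he
    M_comp_iso := fun m i hi hm => by
      simpa using fs.M_comp_iso m.f i.f (alg_iso_f i hi) hm
    iso_comp_M := fun i m hi hm => by
      simpa using fs.iso_comp_M i.f m.f (alg_iso_f i hi) hm
    factor := ?_
    diagonal := ?_ }, fun _ => Iff.rfl, fun _ => Iff.rfl⟩
  · intro A B f
    obtain ⟨I, e, m, he, hm, hem⟩ := fs.factor f.f
    have hsq : F.map e ≫ (F.map m ≫ B.str) = (A.str ≫ e) ≫ m := by
      rw [← Category.assoc, ← F.map_comp, hem, f.h, Category.assoc, hem]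
    obtain ⟨i, ⟨hi1, hi2⟩, _⟩ := fs.diagonal (F.map e) (A.str ≫ e) (F.map m ≫ B.str)
      m (hF e he) hm hsq
    refine ⟨⟨I, i⟩, ⟨e, hi1⟩, ⟨m, hi2.symm⟩, he, hm, ?_⟩
    exact Endofunctor.Algebra.ext hem
  · intro A B X Y e f g m he hm hsq
    have hsqC : e.f ≫ g.f = f.f ≫ m.f := by
      simpa using congrArg Endofunctor.Algebra.Hom.f hsq
    obtain ⟨d, ⟨hd1, hd2⟩, hduniq⟩ := fs.diagonal e.f f.f g.f m.f he hm hsqC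
    have hsq2 : F.map e.f ≫ (B.str ≫ g.f) = (A.str ≫ f.f) ≫ m.f := by
      rw [e.h_assoc, hsqC, Category.assoc]
    obtain ⟨d', _, hd'uniq⟩ := fs.diagonal (F.map e.f) (A.str ≫ f.f) (B.str ≫ g.f)
      m.f (hF e.f he) hm hsq2
    have c1 : F.map e.f ≫ (B.str ≫ d) = A.str ≫ f.f ∧ (B.str ≫ d) ≫ m.f = B.str ≫ g.f := by
      constructor
      · rw [e.h_assoc, hd1]
      · rw [Category.assoc, hd2]
    have c2 : F.map e.f ≫ (F.map d ≫ X.str) = A.str ≫ f.f ∧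
        (F.map d ≫ X.str) ≫ m.f = B.str ≫ g.f := by
      constructor
      · rw [← Functor.map_comp_assoc, hd1, f.h]
      · rw [Category.assoc, ← m.h, ← Functor.map_comp_assoc, hd2, g.h]

    have hdhom : F.map d ≫ X.str = B.str ≫ d := by
      rw [hd'uniq _ c2, hd'uniq _ c1]
    refine ⟨⟨d, hdhom⟩, ⟨Endofunctor.Algebra.ext hd1, Endofunctor.Algebra.ext hd2⟩, ?_⟩
    intro y ⟨hy1, hy2⟩
    exact Endofunctor.Algebra.ext (hduniq y.f
      ⟨by simpa using congrArg Endofunctor.Algebra.Hom.f hy1,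
       by simpa using congrArg Endofunctor.Algebra.Hom.f hy2⟩)
end

section
/- If a monad T : C → C preserves E, then an (E,M)-factorization system on C lifts to the Eilenberg–Moore category of T: the image object of an Eilenberg–Moore algebra homomorphism, computed in Alg(T), again satisfies the Eilenberg–Moore algebra axioms, and the lifted factorization system consists of E-carried and M-carried homomorphisms. -/
open CategoryTheory CategoryTheory.Limits

universe v u

/-- If a monad T preserves E, the (E,M)-factorization system lifts to the
Eilenberg–Moore category of T, consisting of E-carried and M-carried homomorphisms. -/
theorem eilenbergMoore_lift_factorization {C : Type u} [Category.{v} C]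
    (fs : FactorizationSystem C) (T : Monad C)
    (hT : ∀ {X Y : C} (e : X ⟶ Y), fs.E e → fs.E ((T : C ⥤ C).map e)) :
    ∃ fs' : FactorizationSystem (Monad.Algebra T),
      (∀ {A B : Monad.Algebra T} (f : A ⟶ B), fs'.E f ↔ fs.E f.f) ∧
      (∀ {A B : Monad.Algebra T} (f : A ⟶ B), fs'.M f ↔ fs.M f.f) := by
  -- helper: isos in the algebra category have iso carriers
  have isoCar : ∀ {A B : Monad.Algebra T} (i : A ⟶ B), IsIso i → IsIso i.f := by
    intro A B i hi
    exact (inferInstance : IsIso ((Monad.forget T).map i))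
  -- reassociated naturality of the unit and multiplication
  have etaR : ∀ {X Y : C} (h : X ⟶ Y) {Z : C} (k : T.obj Y ⟶ Z),
      h ≫ T.η.app Y ≫ k = T.η.app X ≫ (T : C ⥤ C).map h ≫ k := by
    intro X Y h Z k
    rw [← Category.assoc, ← Category.assoc]
    congr 1
    simpa using T.η.naturality h
  have muR : ∀ {X Y : C} (h : X ⟶ Y) {Z : C} (k : T.obj Y ⟶ Z),
      (T : C ⥤ C).map ((T : C ⥤ C).map h) ≫ T.μ.app Y ≫ k
        = T.μ.app X ≫ (T : C ⥤ C).map h ≫ k := by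
    intro X Y h Z k
    rw [← Category.assoc, ← Category.assoc]
    congr 1
    simpa using T.μ.naturality h
  -- reassociated homomorphism condition
  have homR : ∀ {P Q : Monad.Algebra T} (u : P ⟶ Q) {Z : C} (k : Q.A ⟶ Z),
      (T : C ⥤ C).map u.f ≫ Q.a ≫ k = P.a ≫ u.f ≫ k := by
    intro P Q u Z k
    rw [← Category.assoc, u.h, Category.assoc]
  refine ⟨{
    E := fun {A B} f => fs.E f.f
    M := fun {A B} f => fs.M f.f
    E_comp_iso := fun e i hi he => fs.E_comp_iso e.f i.f (isoCar i hi) he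
    iso_comp_E := fun i e hi he => fs.iso_comp_E i.f e.f (isoCar i hi) he
    M_comp_iso := fun m i hi hm => fs.M_comp_iso m.f i.f (isoCar i hi) hm
    iso_comp_M := fun i m hi hm => fs.iso_comp_M i.f m.f (isoCar i hi) hm
    factor := ?fac
    diagonal := ?dia }, fun f => Iff.rfl, fun f => Iff.rfl⟩
  case fac =>
    intro A B f
    obtain ⟨I, e, m, he, hm, hem⟩ := fs.factor f.f
    obtain ⟨i, ⟨hi1, hi2⟩, hiu⟩ := fs.diagonal ((T : C ⥤ C).map e) (A.a ≫ e)
      ((T : C ⥤ C).map m ≫ B.a) m (hT e he) hm (by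
        rw [← Category.assoc, ← Functor.map_comp, hem, f.h, Category.assoc, hem])
    have hunit : T.η.app I ≫ i = 𝟙 I := by
      obtain ⟨d, _, hdu⟩ := fs.diagonal e e m m he hm rfl
      refine (hdu _ ⟨?_, ?_⟩).trans (hdu _ ⟨by simp, by simp⟩).symm
      · rw [etaR e i, hi1, ← Category.assoc, A.unit]
        simp
      · rw [Category.assoc, hi2, ← etaR m B.a, B.unit]
        simp
    have hassoc : T.μ.app I ≫ i = (T : C ⥤ C).map i ≫ i := by
      obtain ⟨d, _, hdu⟩ := fs.diagonal ((T : C ⥤ C).map ((T : C ⥤ C).map e))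
        ((T : C ⥤ C).map A.a ≫ A.a ≫ e)
        ((T : C ⥤ C).map ((T : C ⥤ C).map m) ≫ (T : C ⥤ C).map B.a ≫ B.a) m
        (hT _ (hT e he)) hm (by
          simp only [Category.assoc]
          calc (T : C ⥤ C).map ((T : C ⥤ C).map e) ≫
                (T : C ⥤ C).map ((T : C ⥤ C).map m) ≫ (T : C ⥤ C).map B.a ≫ B.a
              = (T : C ⥤ C).map ((T : C ⥤ C).map (e ≫ m)) ≫
                  (T : C ⥤ C).map B.a ≫ B.a := by
                rw [Functor.map_comp, Functor.map_comp, Category.assoc]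
            _ = (T : C ⥤ C).map ((T : C ⥤ C).map f.f ≫ B.a) ≫ B.a := by
                rw [hem, Functor.map_comp, Category.assoc]
            _ = (T : C ⥤ C).map (A.a ≫ f.f) ≫ B.a := by rw [f.h]
            _ = (T : C ⥤ C).map A.a ≫ A.a ≫ e ≫ m := by
                rw [Functor.map_comp, Category.assoc, f.h, ← hem])
      refine (hdu _ ⟨?_, ?_⟩).trans (hdu _ ⟨?_, ?_⟩).symm
      · rw [muR e i, hi1, ← Category.assoc, A.assoc, Category.assoc]
      · simp only [Category.assoc]
        rw [hi2, ← muR m B.a, B.assoc]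
      · rw [← Functor.map_comp_assoc, hi1, Functor.map_comp_assoc, hi1]
      · simp only [Category.assoc]
        rw [hi2, ← Functor.map_comp_assoc, hi2, Functor.map_comp, Category.assoc]
    refine ⟨⟨I, i, hunit, hassoc⟩, ⟨e, hi1⟩, ⟨m, hi2.symm⟩, he, hm, ?_⟩
    exact Monad.Algebra.Hom.ext hem
  case dia =>
    intro A B X Y e f g m he hm hcomm
    have hc : e.f ≫ g.f = f.f ≫ m.f := congrArg Monad.Algebra.Hom.f hcomm
    obtain ⟨d, ⟨hd1, hd2⟩, hdu⟩ := fs.diagonal e.f f.f g.f m.f he hm hc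
    -- d is an algebra homomorphism
    have hdh : (T : C ⥤ C).map d ≫ X.a = B.a ≫ d := by
      obtain ⟨d₂, _, hdu₂⟩ := fs.diagonal ((T : C ⥤ C).map e.f) (A.a ≫ f.f)
        (B.a ≫ g.f) m.f (hT e.f he) hm (by
          rw [homR e g.f, hc, Category.assoc])
      refine (hdu₂ _ ⟨?_, ?_⟩).trans (hdu₂ _ ⟨?_, ?_⟩).symm
      · rw [← Functor.map_comp_assoc, hd1, f.h]
      · rw [Category.assoc, ← m.h, ← Functor.map_comp_assoc, hd2, g.h]
      · rw [homR e d, hd1]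
      · rw [Category.assoc, hd2]
    refine ⟨⟨d, hdh⟩, ⟨Monad.Algebra.Hom.ext hd1, Monad.Algebra.Hom.ext hd2⟩, ?_⟩
    intro d' ⟨h1, h2⟩
    exact Monad.Algebra.Hom.ext (hdu d'.f ⟨congrArg Monad.Algebra.Hom.f h1,
      congrArg Monad.Algebra.Hom.f h2⟩)
end

section
/- If weak kernel pairs exist in C and are preserved by F : C → C, then the monomorphisms in Coalg(F) are precisely the coalgebra homomorphisms whose underlying C-morphism is a monomorphism. -/
open CategoryTheory CategoryTheory.Limits

universe v u

/-- `p₁, p₂ : K ⟶ X` form a weak kernel pair of `m : X ⟶ Y`. -/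
def IsWeakKernelPair {C : Type u} [Category.{v} C] {K X Y : C}
    (m : X ⟶ Y) (p₁ p₂ : K ⟶ X) : Prop :=
  p₁ ≫ m = p₂ ≫ m ∧ ∀ {Z : C} (f g : Z ⟶ X), f ≫ m = g ≫ m →
    ∃ h : Z ⟶ K, h ≫ p₁ = f ∧ h ≫ p₂ = g

/-- If weak kernel pairs exist in C and are preserved by F, then the monomorphisms in
Coalg(F) are precisely the Mono-carried coalgebra homomorphisms. -/
theorem coalgebra_mono_iff_mono_carried {C : Type u} [Category.{v} C] (F : C ⥤ C)
    (hex : ∀ {X Y : C} (m : X ⟶ Y),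
      ∃ (K : C) (p₁ p₂ : K ⟶ X), IsWeakKernelPair m p₁ p₂)
    (hpres : ∀ {K X Y : C} (m : X ⟶ Y) (p₁ p₂ : K ⟶ X), IsWeakKernelPair m p₁ p₂ →
      IsWeakKernelPair (F.map m) (F.map p₁) (F.map p₂))
    {A B : Endofunctor.Coalgebra F} (h : A ⟶ B) :
    Mono h ↔ Mono h.f := by
  constructor
  · intro hmono
    obtain ⟨K, p₁, p₂, hwkp⟩ := hex h.f
    obtain ⟨heq, hfac⟩ := hwkp
    obtain ⟨Fheq, Ffac⟩ := hpres h.f p₁ p₂ ⟨heq, hfac⟩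
    obtain ⟨k, hk₁, hk₂⟩ := Ffac (p₁ ≫ A.str) (p₂ ≫ A.str) (by
      rw [Category.assoc, Category.assoc, h.h, ← Category.assoc, ← Category.assoc, heq])
    let K' : Endofunctor.Coalgebra F := ⟨K, k⟩
    let P₁ : K' ⟶ A := ⟨p₁, hk₁⟩
    let P₂ : K' ⟶ A := ⟨p₂, hk₂⟩
    have hP : P₁ ≫ h = P₂ ≫ h := by
      apply Endofunctor.Coalgebra.ext
      simpa using heq
    have hP' : P₁ = P₂ := (cancel_mono h).mp hP
    have hp : p₁ = p₂ := congrArg Endofunctor.Coalgebra.Hom.f hP'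
    constructor
    intro Z f g hfg
    obtain ⟨l, hl₁, hl₂⟩ := hfac f g hfg
    rw [← hl₁, ← hl₂, hp]
  · intro hmono
    constructor
    intro Z u v huv
    apply Endofunctor.Coalgebra.ext
    exact (cancel_mono h.f).mp (by simpa using congrArg Endofunctor.Coalgebra.Hom.f huv)
end

section
/- Assume E is exactly the class of epimorphisms and K has weak equalizers. Then an object C is M-minimal if and only if for every object D there is at most one morphism C → D. -/
open CategoryTheory CategoryTheory.Limits

universe v u

/-- If E = Epi and K has weak equalizers, C is M-minimal iff there is at most one
morphism from C to every object. -/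
theorem minimal_iff_at_most_one_out {K : Type u} [Category.{v} K]
    (fs : FactorizationSystem K)
    (hE : ∀ {X Y : K} (f : X ⟶ Y), fs.E f ↔ Epi f)
    (hweq : ∀ {X Y : K} (u v : X ⟶ Y), ∃ (W : K) (e : W ⟶ X), e ≫ u = e ≫ v ∧
      ∀ {Z : K} (h : Z ⟶ X), h ≫ u = h ≫ v → ∃ k : Z ⟶ W, k ≫ e = h)
    (C : K) :
    MMinimal fs C ↔ ∀ (D : K) (u v : C ⟶ D), u = v := by
  constructor
  · intro hmin D u v
    obtain ⟨W, e, he, -⟩ := hweq u v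
    obtain ⟨I, e', m, hEe, hMm, hfac⟩ := fs.factor e
    have him : IsIso m := hmin m hMm
    have hepi : Epi e' := (hE e').mp hEe
    have h2 : e' ≫ (m ≫ u) = e' ≫ (m ≫ v) := by
      simp only [← Category.assoc, hfac]; exact he
    have h3 : m ≫ u = m ≫ v := by rwa [cancel_epi] at h2
    rwa [cancel_epi m] at h3
  · intro huniq D m hm
    have hepi : Epi m := ⟨fun f g _ => huniq _ f g⟩
    have hEm : fs.E m := (hE m).mpr hepi
    obtain ⟨d, ⟨hd1, hd2⟩, -⟩ := fs.diagonal m (𝟙 D) (𝟙 C) m hEm hm (by simp)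
    exact ⟨d, hd1, hd2⟩
end

section
/- Let M be an M-minimal object, h : M → C any morphism, and s : S → C a morphism in M. Then the pullback of s along h exists if and only if h factors through s via a unique morphism u : M → S with s∘u = h. -/
open CategoryTheory CategoryTheory.Limits

universe v u

/-- Every morphism into an M-minimal object is in E. -/
lemma MMinimal.into_E {K : Type u} [Category.{v} K] {fs : FactorizationSystem K} {C : K}
    (hmin : MMinimal fs C) {D : K} (f : D ⟶ C) : fs.E f := by
  obtain ⟨I, e, m, he, hm, hfac⟩ := fs.factor f
  rw [← hfac]
  exact fs.E_comp_iso e m (hmin m hm) he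


/-- For M-minimal M₀, h : M₀ ⟶ C and s : S ⟶ C in M, the pullback of s along h exists
iff h factors through s via a unique morphism. -/
theorem pullback_exists_iff_unique_factorization {K : Type u} [Category.{v} K]
    (fs : FactorizationSystem K) {M₀ C S : K} (hmin : MMinimal fs M₀)
    (h : M₀ ⟶ C) (s : S ⟶ C) (hs : fs.M s) :
    HasPullback h s ↔ ∃! u : M₀ ⟶ S, u ≫ s = h := by
  constructor
  · intro hpb
    -- the first projection of the pullback is in M, hence an iso by minimality
    set p₁ : pullback h s ⟶ M₀ := pullback.fst h s with hp₁
    set p₂ : pullback h s ⟶ S := pullback.snd h s with hp₂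
    have hcond : p₁ ≫ h = p₂ ≫ s := pullback.condition
    obtain ⟨I, e, m, he, hm, hfac⟩ := fs.factor p₁
    -- diagonal in the square e ≫ (m ≫ h) = p₂ ≫ s
    obtain ⟨d, ⟨hd1, hd2⟩, -⟩ :=
      fs.diagonal e p₂ (m ≫ h) s he hs (by rw [← Category.assoc, hfac, hcond])
    -- lift t : I ⟶ pullback
    have hsq : m ≫ h = d ≫ s := hd2.symm
    let t : I ⟶ pullback h s := pullback.lift m d hsq
    have ht1 : t ≫ p₁ = m := pullback.lift_fst _ _ _
    have ht2 : t ≫ p₂ = d := pullback.lift_snd _ _ _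
    have het : e ≫ t = 𝟙 _ := by
      apply pullback.hom_ext
      · simp [ht1, hfac, p₁]
      · simp [ht2, hd1, p₂]
    have hte : t ≫ e = 𝟙 _ := by
      obtain ⟨d', -, hu⟩ := fs.diagonal e e m m he hm rfl
      have h1 : t ≫ e = d' := hu (t ≫ e) ⟨by rw [← Category.assoc, het, Category.id_comp],
        by rw [Category.assoc, hfac]; exact ht1⟩
      have h2 : 𝟙 I = d' := hu (𝟙 I) ⟨Category.comp_id _, Category.id_comp _⟩
      rw [h1, ← h2]
    have : IsIso e := ⟨t, het, hte⟩
    have hMp₁ : fs.M p₁ := by rw [← hfac]; exact fs.iso_comp_M e m this hm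
    have : IsIso p₁ := hmin p₁ hMp₁
    refine ⟨inv p₁ ≫ p₂, show (inv p₁ ≫ p₂) ≫ s = h by
      rw [Category.assoc, ← hcond, IsIso.inv_hom_id_assoc], ?_⟩
    intro u hu
    have hl : (pullback.lift (𝟙 M₀) u (by simpa using hu.symm) : M₀ ⟶ pullback h s) ≫ p₁ = 𝟙 M₀ :=
      pullback.lift_fst _ _ _
    have : pullback.lift (𝟙 M₀) u (by simpa using hu.symm) = inv p₁ :=
      IsIso.eq_inv_of_inv_hom_id hl
    calc u = pullback.lift (𝟙 M₀) u (by simpa using hu.symm) ≫ p₂ :=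
            (pullback.lift_snd _ _ _).symm
      _ = inv p₁ ≫ p₂ := by rw [this]
  · rintro ⟨u, hu, huniq⟩
    refine HasLimit.mk ⟨PullbackCone.mk (𝟙 M₀) u (by simpa using hu.symm), ?_⟩
    refine PullbackCone.IsLimit.mk _ (fun c => c.fst) (fun c => Category.comp_id _) ?_
      (fun c l hl1 _ => by simpa using hl1)
    intro c
    -- need : c.fst ≫ u = c.snd
    have hE : fs.E c.fst := hmin.into_E c.fst
    obtain ⟨d, ⟨hd1, hd2⟩, -⟩ := fs.diagonal c.fst c.snd h s hE hs c.condition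
    have : d = u := huniq d hd2
    rw [← this, hd1]
end

section
/- If K has pullbacks of M-morphisms along M-morphisms and C has an M-minimization m : M → C, then (M, m) is the least M-subobject of C: every M-subobject s : S → C admits a unique u : M → S with s∘u = m. Consequently the M-minimization is unique up to unique isomorphism. -/
open CategoryTheory CategoryTheory.Limits

universe v u

/-- Auxiliary: an M-minimization is a least M-subobject. -/
lemma minimization_least_aux {K : Type u} [Category.{v} K]
    (fs : FactorizationSystem K)
    (hpb : ∀ {X Y Z : K} (f : X ⟶ Z) (g : Y ⟶ Z), fs.M f → fs.M g → HasPullback f g)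
    {M₀ C : K} (m : M₀ ⟶ C) (hm : fs.M m) (hmin : MMinimal fs M₀)
    {S : K} (s : S ⟶ C) (hs : fs.M s) : ∃! u : M₀ ⟶ S, u ≫ s = m := by
  haveI := hpb m s hm hs
  obtain ⟨I, e, n, he, hn, hen⟩ := fs.factor (pullback.fst m s)
  have hsq : e ≫ (n ≫ m) = pullback.snd m s ≫ s := by
    rw [← Category.assoc, hen]; exact pullback.condition
  obtain ⟨d, ⟨hd1, hd2⟩, -⟩ := fs.diagonal e (pullback.snd m s) (n ≫ m) s he hs hsq
  have ht1 : pullback.lift n d hd2.symm ≫ pullback.fst m s = n := pullback.lift_fst _ _ _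
  have ht2 : pullback.lift n d hd2.symm ≫ pullback.snd m s = d := pullback.lift_snd _ _ _
  have het : e ≫ pullback.lift n d hd2.symm = 𝟙 _ := by
    apply pullback.hom_ext
    · rw [Category.assoc, Category.id_comp, ht1, hen]
    · rw [Category.assoc, Category.id_comp, ht2, hd1]
  have hte : pullback.lift n d hd2.symm ≫ e = 𝟙 I := by
    obtain ⟨d', -, hdu'⟩ := fs.diagonal e e n n he hn rfl
    have h1 : pullback.lift n d hd2.symm ≫ e = d' := hdu' _
      ⟨by rw [← Category.assoc, het, Category.id_comp],
       by rw [Category.assoc, hen, ht1]⟩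
    have h2 : 𝟙 I = d' := hdu' (𝟙 I) ⟨Category.comp_id e, Category.id_comp n⟩
    rw [h1, h2]
  haveI : IsIso e := ⟨pullback.lift n d hd2.symm, het, hte⟩
  haveI : IsIso n := hmin n hn
  have hpiso : IsIso (pullback.fst m s) := by rw [← hen]; infer_instance
  refine ⟨inv (pullback.fst m s) ≫ pullback.snd m s, ?_, ?_⟩
  · show (inv (pullback.fst m s) ≫ pullback.snd m s) ≫ s = m
    rw [Category.assoc, ← pullback.condition, ← Category.assoc, IsIso.inv_hom_id,
      Category.id_comp]
  · intro u hu
    have hw : (𝟙 M₀) ≫ m = u ≫ s := by rw [Category.id_comp, hu]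
    have hv1 : pullback.lift (𝟙 M₀) u hw ≫ pullback.fst m s = 𝟙 M₀ := pullback.lift_fst _ _ _
    have hv2 : pullback.lift (𝟙 M₀) u hw ≫ pullback.snd m s = u := pullback.lift_snd _ _ _
    have hv : pullback.lift (𝟙 M₀) u hw = inv (pullback.fst m s) := by
      rw [← Category.comp_id (pullback.lift (𝟙 M₀) u hw),
        ← IsIso.hom_inv_id (pullback.fst m s), ← Category.assoc, hv1, Category.id_comp]
    rw [← hv2, hv]

/-- If pullbacks of M-morphisms along M-morphisms exist and m : M₀ ⟶ C is an
M-minimization, then M₀ is the least M-subobject of C, and the M-minimization is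
unique up to unique isomorphism. -/
theorem minimization_least_subobject {K : Type u} [Category.{v} K]
    (fs : FactorizationSystem K)
    (hpb : ∀ {X Y Z : K} (f : X ⟶ Z) (g : Y ⟶ Z), fs.M f → fs.M g → HasPullback f g)
    {M₀ C : K} (m : M₀ ⟶ C) (hm : fs.M m) (hmin : MMinimal fs M₀) :
    (∀ {S : K} (s : S ⟶ C), fs.M s → ∃! u : M₀ ⟶ S, u ≫ s = m) ∧
    (∀ {M₁ : K} (m' : M₁ ⟶ C), fs.M m' → MMinimal fs M₁ →
      ∃! φ : M₁ ≅ M₀, φ.hom ≫ m = m') := by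
  constructor
  · intro S s hs
    exact minimization_least_aux fs hpb m hm hmin s hs
  · intro M₁ m' hm' hmin'
    obtain ⟨u, hu, -⟩ := minimization_least_aux fs hpb m hm hmin m' hm'
    obtain ⟨u', hu', hu'uniq⟩ := minimization_least_aux fs hpb m' hm' hmin' m hm
    have h1 : u' ≫ u = 𝟙 M₁ := by
      obtain ⟨w, -, hw⟩ := minimization_least_aux fs hpb m' hm' hmin' m' hm'
      rw [hw (u' ≫ u) (show (u' ≫ u) ≫ m' = m' by rw [Category.assoc, hu, hu']),
        hw (𝟙 M₁) (Category.id_comp m')]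
    have h2 : u ≫ u' = 𝟙 M₀ := by
      obtain ⟨w, -, hw⟩ := minimization_least_aux fs hpb m hm hmin m hm
      rw [hw (u ≫ u') (show (u ≫ u') ≫ m = m by rw [Category.assoc, hu', hu]),
        hw (𝟙 M₀) (Category.id_comp m)]
    refine ⟨⟨u', u, h1, h2⟩, hu', ?_⟩
    intro ψ hψ
    apply Iso.ext
    exact (hu'uniq ψ.hom hψ).trans (hu'uniq u' hu').symm
end

section
/- If M consists of monomorphisms and the least M-subobject m : M → C of an object C exists (i.e., m factors through every M-subobject of C), then M is M-minimal, hence m is the M-minimization of C. -/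
open CategoryTheory CategoryTheory.Limits

universe v u

/-- If M ⊆ Mono and m : M₀ ⟶ C is the least M-subobject of C, then M₀ is M-minimal,
hence m is the M-minimization of C. -/
theorem least_subobject_is_minimal {K : Type u} [Category.{v} K]
    (fs : FactorizationSystem K)
    (hM : ∀ {X Y : K} (m : X ⟶ Y), fs.M m → Mono m)
    {M₀ C : K} (m : M₀ ⟶ C) (hm : fs.M m)
    (hleast : ∀ {S : K} (s : S ⟶ C), fs.M s → ∃ u : M₀ ⟶ S, u ≫ s = m) :
    MMinimal fs M₀ := by
  intro D h hh
  -- factor h ≫ m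
  obtain ⟨I, e, m', he, hm', hfac⟩ := fs.factor (h ≫ m)
  -- diagonal d : I ⟶ M₀ with e ≫ d = h, d ≫ m = m'
  obtain ⟨d, ⟨hd1, hd2⟩, -⟩ := fs.diagonal e h m' m he hm hfac
  -- least gives u : M₀ ⟶ I with u ≫ m' = m
  obtain ⟨u, hu⟩ := hleast m' hm'
  have hmono := hM m hm
  have hmono' := hM m' hm'
  have hD : d ≫ u = 𝟙 I := by
    have : (d ≫ u) ≫ m' = 𝟙 I ≫ m' := by
      rw [Category.assoc, hu, hd2, Category.id_comp]
    exact hmono'.right_cancellation _ _ this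
  have hU : u ≫ d = 𝟙 M₀ := by
    have : (u ≫ d) ≫ m = 𝟙 M₀ ≫ m := by
      rw [Category.assoc, hd2, hu, Category.id_comp]
    exact hmono.right_cancellation _ _ this
  have hdIso : IsIso d := ⟨u, hD, hU⟩
  -- diagonal for square e ≫ d = 𝟙 ≫ h with h ∈ M
  obtain ⟨t, ⟨ht1, ht2⟩, -⟩ :=
    fs.diagonal e (𝟙 D) d h he hh (by rw [hd1, Category.id_comp])
  have hT : t ≫ e = 𝟙 I := by
    haveI := hdIso
    have heq : (t ≫ e) ≫ d = 𝟙 I ≫ d := by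
      rw [Category.assoc, hd1, ht2, Category.id_comp]
    exact (cancel_mono d).mp heq
  have heIso : IsIso e := ⟨t, ht1, hT⟩
  rw [← hd1]
  exact IsIso.comp_isIso
end

section
/- If M ⊆ Mono, K has wide pullbacks of families of M-morphisms, and K is M-wellpowered, then every object of K has an M-minimization, obtained as the wide pullback of all M-subobjects. -/
/-!
Let `p : P ⟶ C` be the projection of the wide pullback of a set of representatives of the
`M`-subobjects of `C`; it factors through every `M`-morphism into `C`. Factor `p = e ≫ m` with
`e : P ⟶ I` in `E` and `m` in `M`. If `h : D ⟶ I` is in `M`, then so is `h ≫ m`, so `p`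
factors as `u ≫ h ≫ m`, and the diagonal of the square `e ≫ m = u ≫ (h ≫ m)` is an inverse
of `h` because `m` and `h` are monic.
-/

open CategoryTheory CategoryTheory.Limits

universe v u

namespace FactorizationSystem

variable {K : Type u} [Category.{v} K] (fs : FactorizationSystem K)

theorem hom_ext_of_E_of_M {A B X Y : K} {e : A ⟶ B} {m : X ⟶ Y} (he : fs.E e) (hm : fs.M m)
    {a b : B ⟶ X} (h₁ : e ≫ a = e ≫ b) (h₂ : a ≫ m = b ≫ m) : a = b :=
  (fs.diagonal e (e ≫ b) (b ≫ m) m he hm (by simp)).unique ⟨h₁, h₂⟩ ⟨rfl, rfl⟩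

theorem isIso_of_E_of_fac_M_comp {X Y Z I : K} {e : X ⟶ I} {m : I ⟶ Z} {g : X ⟶ Y}
    {h : Y ⟶ Z} (he : fs.E e) (hm : fs.M m) (hg : fs.M g) (hh : fs.M h)
    (hfac : e ≫ m = g ≫ h) : IsIso e := by
  -- Two diagonal fill-ins give a retraction `d₂` of `e`; uniqueness of diagonals for the
  -- square `e ≫ m = e ≫ m` makes it a two-sided inverse.
  obtain ⟨d₁, ⟨hd₁e, hd₁h⟩, -⟩ := fs.diagonal e g m h he hh hfac
  obtain ⟨d₂, ⟨hed₂, hd₂g⟩, -⟩ := fs.diagonal e (𝟙 X) d₁ g he hg (by simpa using hd₁e)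
  refine ⟨d₂, hed₂, fs.hom_ext_of_E_of_M he hm ?_ ?_⟩
  · simp [reassoc_of% hed₂]
  · rw [Category.assoc, hfac, reassoc_of% hd₂g, hd₁h, Category.id_comp]

theorem M_comp {X Y Z : K} {g : X ⟶ Y} {h : Y ⟶ Z} (hg : fs.M g) (hh : fs.M h) :
    fs.M (g ≫ h) := by
  obtain ⟨I, e, m, he, hm, hfac⟩ := fs.factor (g ≫ h)
  have := fs.isIso_of_E_of_fac_M_comp he hm hg hh hfac
  exact hfac ▸ fs.iso_comp_M e m this hm

theorem mMinimal_of_factors_through_M {P C I : K} {p : P ⟶ C} {e : P ⟶ I} {m : I ⟶ C}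
    (hM : ∀ {X Y : K} (m : X ⟶ Y), fs.M m → Mono m) (he : fs.E e) (hm : fs.M m)
    (hfac : e ≫ m = p) (hp : ∀ {T : K} (t : T ⟶ C), fs.M t → ∃ u : P ⟶ T, u ≫ t = p) :
    MMinimal fs I := by
  intro D h hh
  have hhm := fs.M_comp hh hm
  obtain ⟨u, hu⟩ := hp (h ≫ m) hhm
  obtain ⟨d, ⟨-, hdh⟩, -⟩ := fs.diagonal e u m (h ≫ m) he hhm (hfac.trans hu.symm)
  have := hM m hm
  have := hM h hh
  have hdh_id : d ≫ h = 𝟙 I := by rw [← cancel_mono m, Category.assoc, hdh, Category.id_comp]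
  exact ⟨d, by simp [← cancel_mono h, hdh_id], hdh_id⟩

end FactorizationSystem

theorem WidePullback.exists_comp_eq_base_of_iso {K : Type u} [Category.{v} K] {ι : Type v}
    {C : K} {S : ι → K} (s : ∀ i, S i ⟶ C) [HasWidePullback C S s] {T : K} {t : T ⟶ C}
    (i : ι) (φ : T ≅ S i) (hφ : φ.hom ≫ s i = t) :
    ∃ u : widePullback C S s ⟶ T, u ≫ t = WidePullback.base s :=
  ⟨WidePullback.π s i ≫ φ.inv, by simp [← hφ]⟩

/-- If M ⊆ Mono, K has wide pullbacks of M-morphisms, and K is M-wellpowered, then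
every object has an M-minimization. -/
theorem minimization_exists {K : Type u} [Category.{v} K] (fs : FactorizationSystem K)
    (hM : ∀ {X Y : K} (m : X ⟶ Y), fs.M m → Mono m)
    (hwide : ∀ {I : Type v} {B : K} (A : I → K) (f : ∀ i, A i ⟶ B),
      (∀ i, fs.M (f i)) → HasLimit (WidePullbackShape.wideCospan B A f))
    (hwp : ∀ C : K, ∃ (ι : Type v) (S : ι → K) (s : ∀ i, S i ⟶ C),
      (∀ i, fs.M (s i)) ∧ ∀ {T : K} (t : T ⟶ C), fs.M t →
        ∃ (i : ι) (φ : T ≅ S i), φ.hom ≫ s i = t)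
    (C : K) :
    ∃ (M₀ : K) (m : M₀ ⟶ C), fs.M m ∧ MMinimal fs M₀ := by
  obtain ⟨ι, S, s, hs, hsub⟩ := hwp C
  have : HasWidePullback C S s := hwide S s hs
  obtain ⟨I, e, m, he, hm, hfac⟩ := fs.factor (WidePullback.base s)
  refine ⟨I, m, hm, fs.mMinimal_of_factors_through_M hM he hm hfac fun t ht => ?_⟩
  obtain ⟨i, φ, hφ⟩ := hsub t ht
  exact WidePullback.exists_comp_eq_base_of_iso s i φ hφ
end

section
/- If pullbacks along M-morphisms exist in K and all M-minimizations exist, then M-minimal objects are closed under E-quotients: for any e : C → D in E with C M-minimal, the object D is M-minimal. -/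
open CategoryTheory CategoryTheory.Limits

universe v u

/-- Every morphism into an M-minimal object is in E. -/
lemma intoMinimal_E {K : Type u} [Category.{v} K] (fs : FactorizationSystem K)
    {A B : K} (f : A ⟶ B) (hB : MMinimal fs B) : fs.E f := by
  obtain ⟨I, e₁, m₁, he₁, hm₁, hfac⟩ := fs.factor f
  have : IsIso m₁ := hB m₁ hm₁
  rw [← hfac]
  exact fs.E_comp_iso e₁ m₁ this he₁

/-- If pullbacks along M-morphisms exist and all M-minimizations exist, then
M-minimal objects are closed under E-quotients. -/
theorem minimal_closed_under_E_quotients {K : Type u} [Category.{v} K]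
    (fs : FactorizationSystem K)
    (hpb : ∀ {X Y Z : K} (f : X ⟶ Z) (m : Y ⟶ Z), fs.M m → HasPullback f m)
    (hmin : ∀ C : K, ∃ (M₀ : K) (m : M₀ ⟶ C), fs.M m ∧ MMinimal fs M₀)
    {C D : K} (e : C ⟶ D) (he : fs.E e) (hC : MMinimal fs C) :
    MMinimal fs D := by
  obtain ⟨M₀, n, hn, hM₀⟩ := hmin D
  -- pull back e along n
  haveI := hpb e n hn
  have hfst : fs.E (pullback.fst e n) := intoMinimal_E fs _ hC
  obtain ⟨d, ⟨_, hdn⟩, _⟩ :=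
    fs.diagonal (pullback.fst e n) (pullback.snd e n) e n hfst hn (pullback.condition)
  have hd : fs.E d := intoMinimal_E fs d hM₀
  -- section s of n
  have hsq : e ≫ 𝟙 D = d ≫ n := by simp [hdn]
  obtain ⟨s, ⟨hes, hsn⟩, _⟩ := fs.diagonal e d (𝟙 D) n he hn hsq
  -- n ≫ s = 𝟙 by uniqueness
  obtain ⟨t, ht, htuniq⟩ := fs.diagonal d d n n hd hn rfl
  have h1 : n ≫ s = 𝟙 M₀ := by
    have e1 : (n ≫ s) = t := htuniq (n ≫ s) ⟨by rw [← Category.assoc, hdn, hes], by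
      rw [Category.assoc, hsn, Category.comp_id]⟩
    have e2 : (𝟙 M₀) = t := htuniq (𝟙 M₀) ⟨Category.comp_id d, Category.id_comp n⟩
    rw [e1, e2]
  haveI : IsIso n := ⟨s, h1, hsn⟩
  intro X h hh
  have : IsIso (h ≫ inv n) := hM₀ _ (fs.M_comp_iso h (inv n) inferInstance hh)
  have : h = (h ≫ inv n) ≫ n := by simp
  rw [this]
  infer_instance
end
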